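/- Let X be a multiset of 3n positive integers with sum n·T, partitioned into n parts such that every part with at least 3 elements has sum at most T. If moreover every element x of X satisfies 4x > T, then every part has sum exactly T and exactly 3 elements. -/
import Mathlib


/-- Soundness of the reduction: let `X` be a multiset of `3n` positive integers
with sum `n * T` such that `4x > T` for every `x ∈ X`, partitioned into `n`
parts so that every part with at least 3 elements has sum at most `T`. Then
every part has exactly 3 elements and sum exactly `T`. -/
theorem soundness_parts_exact (n T : ℕ) (hn : 1 ≤ n)
    (X : Multiset ℕ) (hpos : ∀ x ∈ X, 0 < x)
    (hcard : Multiset.card X = 3 * n) (hsum : X.sum = n * T)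
    (hbig : ∀ x ∈ X, T < 4 * x)
    (P : Fin n → Multiset ℕ) (hpart : ∑ i, P i = X)
    (hfilter : ∀ i, 3 ≤ Multiset.card (P i) → (P i).sum ≤ T) :
    ∀ i, Multiset.card (P i) = 3 ∧ (P i).sum = T := by
  have hle : ∀ i, P i ≤ X := by
    intro i
    rw [← hpart]
    exact Finset.single_le_sum (f := P) (fun j _ => bot_le) (Finset.mem_univ i)
  -- lower bound on sums via 4x ≥ T+1
  have hsum_lb : ∀ i, Multiset.card (P i) * (T + 1) ≤ 4 * (P i).sum := by
    intro i
    have h4 : ((P i).map (fun x => 4 * x)).sum = 4 * (P i).sum := by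
      simpa using (Multiset.sum_map_mul_left (a := 4) (f := id) (s := P i))
    rw [← h4]
    have := Multiset.card_nsmul_le_sum (s := (P i).map (fun x => 4 * x)) (a := T + 1)
      (by
        intro x hx
        obtain ⟨y, hy, rfl⟩ := Multiset.mem_map.mp hx
        exact hbig y (Multiset.mem_of_le (hle i) hy))
    simpa [smul_eq_mul, Multiset.card_map] using this
  -- each part has at most 3 elements
  have hcard_le : ∀ i, Multiset.card (P i) ≤ 3 := by
    intro i
    by_contra h
    push_neg at h
    have h4 : 4 ≤ Multiset.card (P i) := h
    have hs : (P i).sum ≤ T := hfilter i (by omega)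
    have := hsum_lb i
    nlinarith
  -- total card
  have hcardsum : ∑ i, Multiset.card (P i) = 3 * n := by
    rw [← hcard, ← hpart]
    exact (map_sum (⟨⟨Multiset.card, Multiset.card_zero⟩, Multiset.card_add⟩ :
      Multiset ℕ →+ ℕ) P Finset.univ).symm
  have hcard3 : ∀ i, Multiset.card (P i) = 3 := by
    intro i
    by_contra h
    have hlt : Multiset.card (P i) < 3 := lt_of_le_of_ne (hcard_le i) h
    have : ∑ j, Multiset.card (P j) < ∑ _j : Fin n, 3 :=
      Finset.sum_lt_sum (fun j _ => hcard_le j) ⟨i, Finset.mem_univ i, hlt⟩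
    simp [hcardsum, Finset.sum_const, mul_comm] at this
  -- sums
  have hsum_le : ∀ i, (P i).sum ≤ T := fun i => hfilter i (by rw [hcard3 i])
  have hsumsum : ∑ i, (P i).sum = n * T := by
    rw [← hsum, ← hpart]
    exact (map_sum (⟨⟨Multiset.sum, Multiset.sum_zero⟩, Multiset.sum_add⟩ :
      Multiset ℕ →+ ℕ) P Finset.univ).symm
  intro i
  refine ⟨hcard3 i, ?_⟩
  by_contra h
  have hlt : (P i).sum < T := lt_of_le_of_ne (hsum_le i) h
  have : ∑ j, (P j).sum < ∑ _j : Fin n, T :=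
    Finset.sum_lt_sum (fun j _ => hsum_le j) ⟨i, Finset.mem_univ i, hlt⟩
  simp [hsumsum, Finset.sum_const, mul_comm] at this
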